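/- Let q be a prime power. For every function F : H_1(F_q) → ℂ one has ‖M^rd F‖_{ℓ^2(D_1)} ≤ 5 · q^{1/2} · ‖F‖_{ℓ^2(H_1(F_q))}. -/

import Mathlib

/-!
`K` plays the role of the finite field `F_q` with `q = Fintype.card K` elements
(the cardinality of a finite field is automatically a prime power).
The Heisenberg group `H₁(F_q)` is identified with `K × K × K`.
The set `D₁` of non-vertical (refined) projective directions
`{[a : b : c] ∈ P²(F_q) : (a,b) ≠ (0,0)}` is identified with `Option K × K`:
`(some m, γ)` corresponds to `[1 : m : γ]` and `(none, γ)` to `[0 : 1 : γ]`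
(every element of `D₁` has a unique such normal form).
-/

noncomputable section

open Finset

/-- The point with parameter `s` of the horizontal line with refined direction
`ω ∈ D₁` indexed by `τ ∈ F_q`.  For `ω = [1 : m : γ]` the `q` horizontal lines
with `Dir L = ω` are `{(x, m x - γ, τ + γ x) : x ∈ F_q}`, `τ ∈ F_q`; for
`ω = [0 : 1 : γ]` they are `{(γ, y, τ + γ y) : y ∈ F_q}`, `τ ∈ F_q`. -/
def lineRd {K : Type*} [Field K] (ω : Option K × K) (τ : K) (s : K) : K × K × K :=
  match ω.1 with
  | some m => (s, m * s - ω.2, τ + ω.2 * s)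
  | none => (ω.2, s, τ + ω.2 * s)

/-- The refined-direction maximal function `M^rd F` on `D₁ ≃ Option K × K`:
the maximum, over the `q` horizontal lines `L` with `Dir L = ω`, of the sum of
`|F|` along `L`. -/
def Mrd {K : Type*} [Field K] [Fintype K] (Fc : K × K × K → ℂ) (ω : Option K × K) : ℝ :=
  Finset.univ.sup' ⟨(0 : K), Finset.mem_univ _⟩
    fun τ => ∑ s : K, ‖Fc (lineRd ω τ s)‖

/-- `ℓ^r` norm of a complex-valued function on a finite set. -/
def lpNormC {X : Type*} [Fintype X] (r : ℝ) (g : X → ℂ) : ℝ :=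
  (∑ x, ‖g x‖ ^ r) ^ (1 / r)

/-- `ℓ^r` norm of a real-valued function on a finite set. -/
def lpNormR {X : Type*} [Fintype X] (r : ℝ) (g : X → ℝ) : ℝ :=
  (∑ x, |g x| ^ r) ^ (1 / r)


/-!
Split `|F| = g + h`, where `g` is the mean of `|F|` over each vertical fibre `{(x, y, t) : t}`
and `h` has mean zero on every fibre. A line sum of `g` only depends on the projection of the
line to `F_q²`, so it is the same for the `q` lines with a given refined direction; by
Cauchy–Schwarz and since every point of `F_q²` lies on `q + 1` lines, its square sums to at most
`q (q + 1) ‖g‖²`. For `h` the maximum is bounded by the `ℓ²` sum over the parallel lines, and the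
sum over all horizontal lines of the squared line sums of `h` is `q ‖h‖² + ⟨h, T h⟩`, where
`T h (p)` sums `h` over the horizontal plane through `p`. Expanding `‖T h‖²` and summing first
over the base point, the terms pairing two different fibres vanish because `h` has fibre mean
zero; so `‖T h‖ = q ‖h‖` and `⟨h, T h⟩ ≤ q ‖h‖²`. Since
`q ‖g‖² + ‖h‖² = ‖F‖²`, altogether `‖M^rd F‖² ≤ 4 q ‖F‖²`.
-/

open scoped BigOperators

section FiniteField

variable {K M : Type*} [DivisionRing K] [Fintype K] [AddCommMonoid M]

theorem sum_add_mul_eq_sum (f : K → M) (c : K) {α : K} (hα : α ≠ 0) :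
    ∑ x, f (c + x * α) = ∑ x, f x :=
  ((Equiv.mulRight₀ α hα).trans (Equiv.addLeft c)).sum_comp f

theorem sum_sum_add_mul_sub_mul_eq_zero {f : K → M} (hf : ∑ c, f c = 0) (t : K) {α β : K}
    (hαβ : α ≠ 0 ∨ β ≠ 0) : ∑ x, ∑ y, f (t + x * α - y * β) = 0 := by
  rcases hαβ with hα | hβ
  · rw [sum_comm]
    refine sum_eq_zero fun y _ => ?_
    simpa only [add_sub_right_comm] using (sum_add_mul_eq_sum f (t - y * β) hα).trans hf
  · refine sum_eq_zero fun x _ => ?_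
    have := sum_add_mul_eq_sum f (t + x * α) (neg_ne_zero.mpr hβ)
    simpa only [mul_neg, ← sub_eq_add_neg] using this.trans hf

end FiniteField

theorem sum_sq_sum_eq_sum_mul_sum {ι X A R : Type*} [Fintype ι] [Fintype X] [AddGroup A]
    [Fintype A] [CommSemiring R] (ℓ : ι → A → X)
    (hℓ : Function.Bijective fun z : ι × A => ℓ z.1 z.2) (L : X → A → X)
    (hL : ∀ i s d, L (ℓ i s) d = ℓ i (s + d)) (H : X → R) :
    ∑ i, (∑ s, H (ℓ i s)) ^ 2 = ∑ p, H p * ∑ d, H (L p d) := by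
  have hsq : ∀ i, (∑ s, H (ℓ i s)) ^ 2 = ∑ s, H (ℓ i s) * ∑ d, H (L (ℓ i s) d) := by
    intro i
    rw [sq, sum_mul]
    refine sum_congr rfl fun s _ => ?_
    simp only [hL]
    exact congrArg _ (Equiv.sum_comp (Equiv.addLeft s) (fun s' => H (ℓ i s'))).symm
  simp only [hsq, ← Fintype.sum_prod_type']
  exact Fintype.sum_bijective _ hℓ _ _ fun _ => rfl

theorem sum_sq_eq_card_mul_sq_expect_add_sum_sq_sub_expect {ι : Type*} [Fintype ι]
    (f : ι → ℝ) :
    ∑ i, f i ^ 2 = Fintype.card ι * (𝔼 i, f i) ^ 2 + ∑ i, (f i - 𝔼 j, f j) ^ 2 := by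
  simp only [sub_sq, sum_add_distrib, sum_sub_distrib, ← sum_mul, ← mul_sum,
    ← Fintype.card_mul_expect f, sum_const, card_univ, nsmul_eq_mul]
  ring

section Fibers

variable {K : Type*} [Fintype K]

def fiberMean (G : K × K × K → ℝ) (x y : K) : ℝ :=
  𝔼 t, G (x, y, t)

def fiberDeviation (G : K × K × K → ℝ) (p : K × K × K) : ℝ :=
  G p - fiberMean G p.1 p.2.1

theorem sum_fiberDeviation (G : K × K × K → ℝ) (x y : K) :
    ∑ t, fiberDeviation G (x, y, t) = 0 := by
  simp only [fiberDeviation, fiberMean, sum_sub_distrib, sum_const,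
    card_univ, nsmul_eq_mul, Fintype.card_mul_expect, sub_self]

theorem card_mul_sum_sq_fiberMean_add_sum_sq_fiberDeviation (G : K × K × K → ℝ) :
    (Fintype.card K : ℝ) * ∑ x, ∑ y, fiberMean G x y ^ 2 + ∑ p, fiberDeviation G p ^ 2 =
      ∑ p, G p ^ 2 := by
  simp only [Fintype.sum_prod_type, mul_sum, ← sum_add_distrib]
  refine sum_congr rfl fun x _ => sum_congr rfl fun y _ => ?_
  exact (sum_sq_eq_card_mul_sq_expect_add_sum_sq_sub_expect (fun t => G (x, y, t))).symm

end Fibers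

theorem lineRd_fst {K : Type*} [Field K] (ω : Option K × K) (τ s : K) :
    (lineRd ω τ s).1 = (lineRd ω 0 s).1 := by
  rcases ω with ⟨_ | m, γ⟩ <;> rfl

theorem lineRd_snd_fst {K : Type*} [Field K] (ω : Option K × K) (τ s : K) :
    (lineRd ω τ s).2.1 = (lineRd ω 0 s).2.1 := by
  rcases ω with ⟨_ | m, γ⟩ <;> rfl

section Heisenberg

variable {K : Type*} [Field K] [Fintype K]

/-- The points `(u, v, t + x v - y u)` are those joined to `p = (x, y, t)` by a horizontal
line (together with `p` itself). -/
def horizontalPlaneSum (H : K × K × K → ℝ) (p : K × K × K) : ℝ :=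
  ∑ u, ∑ v, H (u, v, p.2.2 + p.1 * v - p.2.1 * u)

theorem sum_horizontal_shift_eq_zero {H : K × K × K → ℝ} (hH : ∀ x y, ∑ t, H (x, y, t) = 0)
    {w w' : K × K} (hw : w' ≠ w) (t : K) :
    ∑ z : K × K, H (w'.1, w'.2, t + z.1 * (w'.2 - w.2) - z.2 * (w'.1 - w.1)) = 0 := by
  rw [Fintype.sum_prod_type]
  refine sum_sum_add_mul_sub_mul_eq_zero (hH w'.1 w'.2) t ?_
  rw [sub_ne_zero, sub_ne_zero]
  by_contra! h
  exact hw (Prod.ext h.2 h.1)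

theorem sum_sq_horizontalPlaneSum {H : K × K × K → ℝ} (hH : ∀ x y, ∑ t, H (x, y, t) = 0) :
    ∑ p, horizontalPlaneSum H p ^ 2 = (Fintype.card K : ℝ) ^ 2 * ∑ p, H p ^ 2 := by
  have hexpand : ∀ z : K × K, ∑ t, horizontalPlaneSum H (z.1, z.2, t) ^ 2 =
      ∑ w : K × K, ∑ w' : K × K, ∑ t, H (w.1, w.2, t) *
        H (w'.1, w'.2, t + z.1 * (w'.2 - w.2) - z.2 * (w'.1 - w.1)) := by
    intro z
    simp only [horizontalPlaneSum, ← Fintype.sum_prod_type', sq, sum_mul_sum]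
    refine Fintype.sum_equiv
      ⟨fun x => (x.2.1, x.2.2, x.1 + z.1 * x.2.1.2 - z.2 * x.2.1.1),
        fun y => (y.2.2 - z.1 * y.1.2 + z.2 * y.1.1, y.1, y.2.1),
        fun x => by ext <;> simp only; ring, fun y => by ext <;> simp only; ring⟩ _ _ fun x => ?_
    simp only [Equiv.coe_fn_mk]
    ring_nf
  have hfibers : ∀ f : K × K × K → ℝ, ∑ p, f p = ∑ w : K × K, ∑ t, f (w.1, w.2, t) := by
    intro f
    simp only [Fintype.sum_prod_type]
  have hdiag : ∀ (w : K × K) (t : K), ∑ w' : K × K, H (w.1, w.2, t) *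
      ∑ z : K × K, H (w'.1, w'.2, t + z.1 * (w'.2 - w.2) - z.2 * (w'.1 - w.1)) =
        (Fintype.card K : ℝ) ^ 2 * H (w.1, w.2, t) ^ 2 := by
    intro w t
    rw [sum_eq_single w
      (fun w' _ hw => by rw [sum_horizontal_shift_eq_zero hH hw, mul_zero])
      (fun h => absurd (mem_univ w) h)]
    simp only [sub_self, mul_zero, add_zero, sub_zero, sum_const, card_univ,
      Fintype.card_prod, nsmul_eq_mul, Nat.cast_mul]
    ring
  calc ∑ p, horizontalPlaneSum H p ^ 2
      = ∑ z : K × K, ∑ w : K × K, ∑ w' : K × K, ∑ t, H (w.1, w.2, t) *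
          H (w'.1, w'.2, t + z.1 * (w'.2 - w.2) - z.2 * (w'.1 - w.1)) := by
        rw [hfibers]
        exact sum_congr rfl fun z _ => hexpand z
    _ = ∑ w : K × K, ∑ t, ∑ w' : K × K, H (w.1, w.2, t) *
          ∑ z : K × K, H (w'.1, w'.2, t + z.1 * (w'.2 - w.2) - z.2 * (w'.1 - w.1)) := by
        simp only [mul_sum]
        rw [sum_comm]
        refine sum_congr rfl fun w _ => ?_
        conv_lhs => rw [sum_comm]; enter [2, w']; rw [sum_comm]
        exact sum_comm
    _ = (Fintype.card K : ℝ) ^ 2 * ∑ p, H p ^ 2 := by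
        simp only [hdiag]
        rw [hfibers (fun p => H p ^ 2), mul_sum]
        simp only [mul_sum]

theorem sum_mul_horizontalPlaneSum_le {H : K × K × K → ℝ} (hH : ∀ x y, ∑ t, H (x, y, t) = 0) :
    ∑ p, H p * horizontalPlaneSum H p ≤ (Fintype.card K : ℝ) * ∑ p, H p ^ 2 := by
  have hq : (0 : ℝ) ≤ Fintype.card K := Nat.cast_nonneg _
  calc ∑ p, H p * horizontalPlaneSum H p
      ≤ √(∑ p, H p ^ 2) * √(∑ p, horizontalPlaneSum H p ^ 2) :=
        Real.sum_mul_le_sqrt_mul_sqrt _ _ _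
    _ = (Fintype.card K : ℝ) * ∑ p, H p ^ 2 := by
        rw [sum_sq_horizontalPlaneSum hH, Real.sqrt_mul (sq_nonneg _), Real.sqrt_sq hq,
          mul_left_comm, Real.mul_self_sqrt (sum_nonneg fun p _ => sq_nonneg _)]

theorem sum_sq_sum_lineRd_some (H : K × K × K → ℝ) (m : K) :
    ∑ γ, ∑ τ, (∑ s, H (lineRd (some m, γ) τ s)) ^ 2 =
      ∑ p, H p * ∑ d, H (p.1 + d, p.2.1 + m * d, p.2.2 + (m * p.1 - p.2.1) * d) := by
  rw [← Fintype.sum_prod_type']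
  refine sum_sq_sum_eq_sum_mul_sum (fun (i : K × K) s => lineRd (some m, i.1) i.2 s) ?_
    (fun p d => (p.1 + d, p.2.1 + m * d, p.2.2 + (m * p.1 - p.2.1) * d)) (fun i s d => ?_) H
  · refine Function.bijective_iff_has_inverse.mpr
      ⟨fun p => ((m * p.1 - p.2.1, p.2.2 - (m * p.1 - p.2.1) * p.1), p.1), fun z => ?_,
        fun p => ?_⟩ <;> ext <;> simp only [lineRd] <;> ring
  · ext <;> simp only [lineRd] <;> ring

theorem sum_sq_sum_lineRd_none (H : K × K × K → ℝ) :
    ∑ γ, ∑ τ, (∑ s, H (lineRd (none, γ) τ s)) ^ 2 =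
      ∑ p, H p * ∑ d, H (p.1, p.2.1 + d, p.2.2 + p.1 * d) := by
  rw [← Fintype.sum_prod_type']
  refine sum_sq_sum_eq_sum_mul_sum (fun (i : K × K) s => lineRd (none, i.1) i.2 s) ?_
    (fun p d => (p.1, p.2.1 + d, p.2.2 + p.1 * d)) (fun i s d => ?_) H
  · refine Function.bijective_iff_has_inverse.mpr
      ⟨fun p => ((p.1, p.2.2 - p.1 * p.2.1), p.2.1), fun z => ?_,
        fun p => ?_⟩
    · ext <;> simp only [lineRd]
      ring
    · ext <;> simp only [lineRd]
      ring
  · ext <;> simp only [lineRd]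
    ring

theorem sum_linesThrough_eq (H : K × K × K → ℝ) (p : K × K × K) :
    ∑ m, ∑ d, H (p.1 + d, p.2.1 + m * d, p.2.2 + (m * p.1 - p.2.1) * d) +
        ∑ d, H (p.1, p.2.1 + d, p.2.2 + p.1 * d) =
      (Fintype.card K : ℝ) * H p + horizontalPlaneSum H p := by
  classical
  obtain ⟨x, y, t⟩ := p
  set φ : K → ℝ := fun u => ∑ v, H (u, v, t + x * v - y * u)
  have hvertical : ∑ d, H (x, y + d, t + x * d) = φ x :=
    Fintype.sum_equiv (Equiv.addLeft y) _ _ fun d => by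
      simp only [Equiv.coe_addLeft]
      ring_nf
  have hslanted : ∀ d ∈ ({0}ᶜ : Finset K),
      ∑ m, H (x + d, y + m * d, t + (m * x - y) * d) = φ (x + d) := by
    intro d hd
    refine (sum_congr rfl fun m _ => ?_).trans
      (sum_add_mul_eq_sum (fun v => H (x + d, v, t + x * v - y * (x + d))) y
        (by simpa using hd))
    ring_nf
  have hplane : horizontalPlaneSum H (x, y, t) = φ x + ∑ d ∈ ({0}ᶜ : Finset K), φ (x + d) := by
    rw [horizontalPlaneSum, ← Equiv.sum_comp (Equiv.addLeft x) φ, Fintype.sum_eq_add_sum_compl 0]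
    simp only [Equiv.coe_addLeft, add_zero, φ]
  rw [sum_comm, Fintype.sum_eq_add_sum_compl 0, sum_congr rfl hslanted,
    hvertical, hplane]
  simp only [add_zero, mul_zero, sum_const, card_univ, nsmul_eq_mul]
  ring

theorem sum_sq_sum_lineRd (H : K × K × K → ℝ) :
    ∑ ω : Option K × K, ∑ τ, (∑ s, H (lineRd ω τ s)) ^ 2 =
      (Fintype.card K : ℝ) * ∑ p, H p ^ 2 + ∑ p, H p * horizontalPlaneSum H p := by
  rw [Fintype.sum_prod_type, Fintype.sum_option, sum_sq_sum_lineRd_none]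
  simp only [sum_sq_sum_lineRd_some]
  have hpoint : ∀ p : K × K × K, H p * ∑ d, H (p.1, p.2.1 + d, p.2.2 + p.1 * d) +
      ∑ m, H p * ∑ d, H (p.1 + d, p.2.1 + m * d, p.2.2 + (m * p.1 - p.2.1) * d) =
        (Fintype.card K : ℝ) * H p ^ 2 + H p * horizontalPlaneSum H p := by
    intro p
    rw [← mul_sum, ← mul_add, add_comm, sum_linesThrough_eq]
    ring
  rw [sum_comm, ← sum_add_distrib, sum_congr rfl fun p _ => hpoint p,
    sum_add_distrib, mul_sum]

theorem sum_sq_sum_lineRd_le {H : K × K × K → ℝ} (hH : ∀ x y, ∑ t, H (x, y, t) = 0) :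
    ∑ ω : Option K × K, ∑ τ, (∑ s, H (lineRd ω τ s)) ^ 2 ≤
      2 * (Fintype.card K : ℝ) * ∑ p, H p ^ 2 := by
  rw [sum_sq_sum_lineRd]
  linarith [sum_mul_horizontalPlaneSum_le hH]

-- Each point of `K × K` lies on exactly `q + 1` of the projected lines.
theorem sum_sum_lineRd_proj (g : K → K → ℝ) :
    ∑ ω : Option K × K, ∑ s, g (lineRd ω 0 s).1 (lineRd ω 0 s).2.1 =
      ((Fintype.card K : ℝ) + 1) * ∑ x, ∑ y, g x y := by
  have hslope : ∀ m : K, ∑ γ, ∑ s, g (lineRd (some m, γ) 0 s).1 (lineRd (some m, γ) 0 s).2.1 =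
      ∑ x, ∑ y, g x y := by
    intro m
    rw [sum_comm]
    exact sum_congr rfl fun s _ => Equiv.sum_comp (Equiv.subLeft (m * s)) (g s)
  rw [Fintype.sum_prod_type, Fintype.sum_option, sum_congr rfl fun m _ => hslope m]
  simp only [lineRd, sum_const, card_univ, nsmul_eq_mul]
  ring

theorem sum_sq_sum_lineRd_proj_le (g : K → K → ℝ) :
    ∑ ω : Option K × K, (∑ s, g (lineRd ω 0 s).1 (lineRd ω 0 s).2.1) ^ 2 ≤
      (Fintype.card K : ℝ) * ((Fintype.card K : ℝ) + 1) * ∑ x, ∑ y, g x y ^ 2 := by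
  calc ∑ ω : Option K × K, (∑ s, g (lineRd ω 0 s).1 (lineRd ω 0 s).2.1) ^ 2
      ≤ ∑ ω : Option K × K, (Fintype.card K : ℝ) *
          ∑ s, g (lineRd ω 0 s).1 (lineRd ω 0 s).2.1 ^ 2 :=
        sum_le_sum fun ω _ => sq_sum_le_card_mul_sum_sq
    _ = _ := by rw [← mul_sum, sum_sum_lineRd_proj (fun x y => g x y ^ 2), mul_assoc]

theorem sum_lineRd_eq_add (G : K × K × K → ℝ) (ω : Option K × K) (τ : K) :
    ∑ s, G (lineRd ω τ s) = ∑ s, fiberMean G (lineRd ω 0 s).1 (lineRd ω 0 s).2.1 +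
      ∑ s, fiberDeviation G (lineRd ω τ s) := by
  rw [← sum_add_distrib]
  refine sum_congr rfl fun s _ => ?_
  rw [fiberDeviation, lineRd_fst ω τ, lineRd_snd_fst ω τ]
  ring

end Heisenberg

section MaximalFunction

variable {K : Type*} [Field K] [Fintype K]

theorem Mrd_nonneg (Fc : K × K × K → ℂ) (ω : Option K × K) : 0 ≤ Mrd Fc ω :=
  (sum_nonneg fun _ _ => norm_nonneg _).trans
    (le_sup' (fun τ => ∑ s, ‖Fc (lineRd ω τ s)‖) (mem_univ 0))

-- The mean part of a line sum is the same on all `q` lines with refined direction `ω`, so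
-- taking the maximum over them costs nothing there.
theorem Mrd_le_add_sqrt (Fc : K × K × K → ℂ) (ω : Option K × K) :
    Mrd Fc ω ≤ ∑ s, fiberMean (‖Fc ·‖) (lineRd ω 0 s).1 (lineRd ω 0 s).2.1 +
      √(∑ τ, (∑ s, fiberDeviation (‖Fc ·‖) (lineRd ω τ s)) ^ 2) := by
  refine sup'_le _ _ fun τ _ => ?_
  rw [sum_lineRd_eq_add (‖Fc ·‖)]
  gcongr
  exact (le_abs_self _).trans (Real.abs_le_sqrt (single_le_sum
    (f := fun τ => (∑ s, fiberDeviation (‖Fc ·‖) (lineRd ω τ s)) ^ 2)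
    (fun _ _ => sq_nonneg _) (mem_univ τ)))

theorem sum_sq_Mrd_le (Fc : K × K × K → ℂ) :
    ∑ ω, Mrd Fc ω ^ 2 ≤ 4 * (Fintype.card K : ℝ) * ∑ p, ‖Fc p‖ ^ 2 := by
  have hA := sum_sq_sum_lineRd_proj_le (fiberMean (‖Fc ·‖))
  have hB := sum_sq_sum_lineRd_le (sum_fiberDeviation (‖Fc ·‖))
  have hpyth := card_mul_sum_sq_fiberMean_add_sum_sq_fiberDeviation (‖Fc ·‖)
  have hmean : 0 ≤ ∑ x, ∑ y, fiberMean (‖Fc ·‖) x y ^ 2 :=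
    sum_nonneg fun _ _ => sum_nonneg fun _ _ => sq_nonneg _
  set q : ℝ := (Fintype.card K : ℝ)
  set A : Option K × K → ℝ := fun ω =>
    ∑ s, fiberMean (‖Fc ·‖) (lineRd ω 0 s).1 (lineRd ω 0 s).2.1
  set B : Option K × K → ℝ := fun ω =>
    ∑ τ, (∑ s, fiberDeviation (‖Fc ·‖) (lineRd ω τ s)) ^ 2
  have hq : 1 ≤ q := Nat.one_le_cast.mpr Fintype.card_pos
  have hpoint : ∀ ω, Mrd Fc ω ^ 2 ≤ 2 * A ω ^ 2 + 2 * B ω := by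
    intro ω
    have hB : √(B ω) ^ 2 = B ω := Real.sq_sqrt (sum_nonneg fun _ _ => sq_nonneg _)
    have := pow_le_pow_left₀ (Mrd_nonneg Fc ω) (Mrd_le_add_sqrt Fc ω) 2
    nlinarith [sq_nonneg (A ω - √(B ω))]
  calc ∑ ω, Mrd Fc ω ^ 2 ≤ ∑ ω, (2 * A ω ^ 2 + 2 * B ω) := sum_le_sum fun ω _ => hpoint ω
    _ = 2 * ∑ ω, A ω ^ 2 + 2 * ∑ ω, B ω := by
        rw [sum_add_distrib, mul_sum, mul_sum]
    _ ≤ 4 * q * ∑ p, ‖Fc p‖ ^ 2 := by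
        rw [← hpyth]
        nlinarith [mul_nonneg (mul_nonneg (sub_nonneg.mpr hq) (zero_le_one.trans hq)) hmean]

end MaximalFunction

theorem lpNormR_two {X : Type*} [Fintype X] (g : X → ℝ) : lpNormR 2 g = √(∑ x, g x ^ 2) := by
  simp only [lpNormR, Real.rpow_two, sq_abs, Real.sqrt_eq_rpow]

theorem lpNormC_two {X : Type*} [Fintype X] (g : X → ℂ) :
    lpNormC 2 g = √(∑ x, ‖g x‖ ^ 2) := by
  simp only [lpNormC, Real.rpow_two, Real.sqrt_eq_rpow]

/-- sharp `ℓ²` bound for the refined-direction maximal operator.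
For every `F : H₁(F_q) → ℂ`,
`‖M^rd F‖_{ℓ²(D₁)} ≤ 5 · q^{1/2} · ‖F‖_{ℓ²(H₁(F_q))}`. -/
theorem stmt_12 {K : Type*} [Field K] [Fintype K] (Fc : K × K × K → ℂ) :
    lpNormR 2 (Mrd Fc) ≤
      5 * (Fintype.card K : ℝ) ^ ((1 : ℝ) / 2) * lpNormC 2 Fc := by
  rw [lpNormR_two, lpNormC_two, ← Real.sqrt_eq_rpow]
  calc √(∑ ω, Mrd Fc ω ^ 2)
      ≤ √(4 * (Fintype.card K : ℝ) * ∑ p, ‖Fc p‖ ^ 2) := Real.sqrt_le_sqrt (sum_sq_Mrd_le Fc)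
    _ = 2 * √(Fintype.card K : ℝ) * √(∑ p, ‖Fc p‖ ^ 2) := by
        rw [Real.sqrt_mul' _ (sum_nonneg fun _ _ => sq_nonneg _),
          Real.sqrt_mul' _ (Nat.cast_nonneg _), show (4 : ℝ) = 2 ^ 2 by norm_num,
          Real.sqrt_sq zero_le_two]
    _ ≤ 5 * √(Fintype.card K : ℝ) * √(∑ p, ‖Fc p‖ ^ 2) := by gcongr; norm_num
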